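/- In the group G₂ = ⟨x, y, z : xy = yx, zxz⁻¹ = x⁻¹, zyz⁻¹ = y⁻¹⟩, the number of subgroups of index n isomorphic to G₂ itself equals ω(n) - ω(n/2), where ω(m) = Σ_{abc=m} a²b and ω(n/2) = 0 if n is odd. -/

import Mathlib

/-- The relations of `π₁(𝒢₂)`: `x y x⁻¹ y⁻¹ = 1`, `z x z⁻¹ x = 1`, `z y z⁻¹ y = 1`. -/
def g2Rels : Set (FreeGroup (Fin 3)) :=
  { FreeGroup.of 0 * FreeGroup.of 1 * (FreeGroup.of 0)⁻¹ * (FreeGroup.of 1)⁻¹,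
    FreeGroup.of 2 * FreeGroup.of 0 * (FreeGroup.of 2)⁻¹ * FreeGroup.of 0,
    FreeGroup.of 2 * FreeGroup.of 1 * (FreeGroup.of 2)⁻¹ * FreeGroup.of 1 }

/-- The fundamental group of the platycosm `𝒢₂`. -/
abbrev G2 : Type := PresentedGroup g2Rels

/-- `omegaFn n = ∑_{a*b*c = n} a² * b`, summing over ordered triples of positive integers. -/
def omegaFn (n : ℕ) : ℕ :=
  ∑ t ∈ (Finset.range (n+1) ×ˢ Finset.range (n+1) ×ˢ Finset.range (n+1)).filter
      (fun t => 0 < t.1 ∧ 0 < t.2.1 ∧ 0 < t.2.2 ∧ t.1 * t.2.1 * t.2.2 = n),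
    t.1 ^ 2 * t.2.1

/-!
Write `G₂ = ℤ² ⋊ ℤ`, the element `x^a y^b z^c` having coordinates `(a, b, c)`. A subgroup `H` of
finite index has a unique triangular generating set `⟨a, 0, 0⟩, ⟨s, b, 0⟩, ⟨t, u, γ⟩` in Hermite
normal form (`a, b, γ > 0`, `0 ≤ s, t < a`, `0 ≤ u < b`): `γ` generates the `c`-coordinates of `H`,
`b` the `b`-coordinates of `H ∩ {c = 0}` and `a` the `a`-coordinates of `H ∩ {b = c = 0}`. Its
index is `abγ`, with the box `[0, a) × [0, b) × [0, γ)` as a transversal. If `γ` is even, `H` lies in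
the abelian subgroup `{c even}`; if `γ` is odd, the generators satisfy the relations of `G₂` and
`x, y, z ↦` generators is an isomorphism onto `H`. So the count is `∑_{abγ = n, γ odd} a² b`,
and halving `γ` identifies the terms with `γ` even with those of `ω(n/2)`.
-/

lemma zpow_mul_zpow_of_conj_eq_inv {G : Type*} [Group G] {w x : G} (h : w * x * w⁻¹ = x⁻¹)
    (c m : ℤ) : w ^ c * x ^ m = x ^ ((c.negOnePow : ℤ) * m) * w ^ c := by
  have h₁ : SemiconjBy w x x⁻¹ := by
    rw [SemiconjBy, ← h]; group
  have hc : SemiconjBy (w ^ c) x (x ^ (c.negOnePow : ℤ)) := by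
    induction c using Int.induction_on with
    | zero => simp [SemiconjBy]
    | succ n ih =>
      rw [zpow_add_one, Int.negOnePow_succ, Units.val_neg, zpow_neg]
      exact ih.inv_right.mul_left h₁
    | pred n ih =>
      rw [zpow_sub_one, Int.negOnePow_sub, Int.negOnePow_one, Units.val_mul, Units.val_neg,
        Units.val_one, mul_neg_one, zpow_neg x]
      have h₂ := h₁.inv_symm_left.inv_right
      rw [inv_inv] at h₂
      exact ih.inv_right.mul_left h₂
  rw [zpow_mul]
  exact (hc.zpow_right m).eq

lemma Int.ne_zero_of_odd {n : ℤ} (hn : Odd n) : n ≠ 0 := by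
  rintro rfl; simp at hn

lemma Int.eq_of_dvd_sub {n x y : ℤ} (hx : x ∈ Set.Ico 0 n) (hy : y ∈ Set.Ico 0 n)
    (h : n ∣ y - x) : x = y := by
  obtain ⟨hx₀, hxn⟩ := hx
  obtain ⟨hy₀, hyn⟩ := hy
  have := Int.eq_zero_of_abs_lt_dvd h (abs_sub_lt_iff.mpr ⟨by linarith, by linarith⟩)
  linarith

lemma Fin.eq_of_dvd_sub {n : ℕ} {i j : Fin n} (h : (n : ℤ) ∣ (j : ℤ) - i) : i = j :=
  Fin.ext <| by
    exact_mod_cast Int.eq_of_dvd_sub (n := n) ⟨by positivity, by simp⟩ ⟨by positivity, by simp⟩ h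

lemma Int.exists_add_units_mul_mem_Ico (x : ℤ) (σ : ℤˣ) {q : ℤ} (hq : 0 < q) :
    ∃ m : ℤ, 0 ≤ x + σ * (m * q) ∧ x + σ * (m * q) < q := by
  refine ⟨σ * -(x / q), ?_⟩
  rw [mul_assoc, ← mul_assoc (σ : ℤ), Int.isUnit_mul_self (Units.isUnit _), one_mul,
    neg_mul, ← sub_eq_add_neg, mul_comm, ← Int.emod_def]
  exact ⟨Int.emod_nonneg x hq.ne', Int.emod_lt_of_pos x hq⟩

lemma Int.exists_pos_dvd_of_sub_mem {S : Set ℤ} (hS : ∀ x ∈ S, ∀ y ∈ S, x - y ∈ S) {x₀ : ℤ}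
    (hx₀ : x₀ ∈ S) (hne : x₀ ≠ 0) : ∃ d ∈ S, 0 < d ∧ ∀ x ∈ S, d ∣ x := by
  let A : AddSubgroup ℤ := .ofSub S ⟨x₀, hx₀⟩ fun x hx y hy => by
    simpa [sub_eq_add_neg] using hS x hx y hy
  obtain ⟨d, hd⟩ := Int.subgroup_cyclic A
  have hmem (x : ℤ) : x ∈ S ↔ d ∣ x := by
    change x ∈ A ↔ _
    rw [hd, ← AddSubgroup.zmultiples_eq_closure, Int.mem_zmultiples_iff]
  refine ⟨|d|, (hmem _).mpr (self_dvd_abs d), abs_pos.mpr ?_,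
    fun x hx => (abs_dvd d x).mpr ((hmem x).mp hx)⟩
  rintro rfl
  exact hne (zero_dvd_iff.mp ((hmem x₀).mp hx₀))

lemma exists_pos_dvd_of_map_mul_inv {G : Type*} [Group G] {S : Set G}
    (hS : ∀ g ∈ S, ∀ h ∈ S, g * h⁻¹ ∈ S) (f : G → ℤ)
    (hf : ∀ g ∈ S, ∀ h ∈ S, f (g * h⁻¹) = f g - f h) {g₀ : G} (hg₀ : g₀ ∈ S) (hne : f g₀ ≠ 0) :
    ∃ g ∈ S, 0 < f g ∧ ∀ h ∈ S, f g ∣ f h := by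
  have hsub : ∀ x ∈ f '' S, ∀ y ∈ f '' S, x - y ∈ f '' S := by
    rintro _ ⟨g, hg, rfl⟩ _ ⟨h, hh, rfl⟩
    exact ⟨g * h⁻¹, hS g hg h hh, hf g hg h hh⟩
  obtain ⟨_, ⟨g, hg, rfl⟩, hpos, hdvd⟩ := Int.exists_pos_dvd_of_sub_mem hsub ⟨g₀, hg₀, rfl⟩ hne
  exact ⟨g, hg, hpos, fun h hh => hdvd _ ⟨h, hh, rfl⟩⟩

/-- `ℤ² ⋊ ℤ`, the generator of `ℤ` acting by `-1`; `⟨a, b, c⟩` stands for `x^a y^b z^c`. -/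
@[ext] structure G2Model where
  a : ℤ
  b : ℤ
  c : ℤ

namespace G2Model

instance : Mul G2Model :=
  ⟨fun g h => ⟨g.a + g.c.negOnePow * h.a, g.b + g.c.negOnePow * h.b, g.c + h.c⟩⟩
instance : One G2Model := ⟨⟨0, 0, 0⟩⟩
instance : Inv G2Model := ⟨fun g => ⟨-(g.c.negOnePow * g.a), -(g.c.negOnePow * g.b), -g.c⟩⟩

@[simp] lemma a_mul (g h : G2Model) : (g * h).a = g.a + g.c.negOnePow * h.a := rfl
@[simp] lemma b_mul (g h : G2Model) : (g * h).b = g.b + g.c.negOnePow * h.b := rfl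
@[simp] lemma c_mul (g h : G2Model) : (g * h).c = g.c + h.c := rfl
@[simp] lemma a_one : (1 : G2Model).a = 0 := rfl
@[simp] lemma b_one : (1 : G2Model).b = 0 := rfl
@[simp] lemma c_one : (1 : G2Model).c = 0 := rfl
@[simp] lemma mk_zero_zero_zero : (⟨0, 0, 0⟩ : G2Model) = 1 := rfl
@[simp] lemma a_inv (g : G2Model) : g⁻¹.a = -(g.c.negOnePow * g.a) := rfl
@[simp] lemma b_inv (g : G2Model) : g⁻¹.b = -(g.c.negOnePow * g.b) := rfl
@[simp] lemma c_inv (g : G2Model) : g⁻¹.c = -g.c := rfl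

instance : Group G2Model :=
  Group.ofLeftAxioms
    (fun g h k => by
      ext <;> simp only [a_mul, b_mul, c_mul, Int.negOnePow_add, Units.val_mul] <;> ring)
    (fun g => by ext <;> simp)
    (fun g => by ext <;> simp)

@[simp] lemma c_zpow (g : G2Model) (k : ℤ) : (g ^ k).c = k * g.c := by
  induction k using Int.induction_on with
  | zero => simp
  | succ n ih => rw [zpow_add_one, c_mul, ih]; ring
  | pred n ih => rw [zpow_sub_one, c_mul, c_inv, ih]; ring

lemma translation_zpow (p q k : ℤ) : (⟨p, q, 0⟩ : G2Model) ^ k = ⟨k * p, k * q, 0⟩ := by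
  induction k using Int.induction_on with
  | zero => ext <;> simp
  | succ n ih => rw [zpow_add_one, ih]; ext <;> simp <;> ring
  | pred n ih => rw [zpow_sub_one, ih]; ext <;> simp <;> ring

lemma vertical_zpow (k : ℤ) : (⟨0, 0, 1⟩ : G2Model) ^ k = ⟨0, 0, k⟩ := by
  induction k using Int.induction_on with
  | zero => ext <;> simp
  | succ n ih => rw [zpow_add_one, ih]; ext <;> simp
  | pred n ih => rw [zpow_sub_one, ih]; ext <;> simp; ring

lemma translation_mul (p q : ℤ) (g : G2Model) :
    (⟨p, q, 0⟩ : G2Model) * g = ⟨p + g.a, q + g.b, g.c⟩ := by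
  ext <;> simp

def lift {G : Type*} [Group G] (X Y W : G) (hXY : Commute X Y) (hX : W * X * W⁻¹ = X⁻¹)
    (hY : W * Y * W⁻¹ = Y⁻¹) : G2Model →* G where
  toFun g := X ^ g.a * Y ^ g.b * W ^ g.c
  map_one' := by simp
  map_mul' := by
    rintro ⟨p, q, r⟩ ⟨p', q', r'⟩
    have hXW := zpow_mul_zpow_of_conj_eq_inv hX r p'
    have hYW := zpow_mul_zpow_of_conj_eq_inv hY r q'
    have hYX := (hXY.zpow_zpow (r.negOnePow * p') q).symm.eq
    symm
    calc X ^ p * Y ^ q * W ^ r * (X ^ p' * Y ^ q' * W ^ r')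
        = X ^ p * Y ^ q * (W ^ r * X ^ p') * Y ^ q' * W ^ r' := by group
      _ = X ^ p * (Y ^ q * X ^ (r.negOnePow * p')) * (W ^ r * Y ^ q') * W ^ r' := by
          rw [hXW]; group
      _ = X ^ (p + r.negOnePow * p') * Y ^ (q + r.negOnePow * q') * W ^ (r + r') := by
          rw [hYX, hYW]; group

section Embed

variable (a b s t u : ℤ) {γ : ℤ} (hγ : Odd γ)

def embed : G2Model →* G2Model :=
  lift ⟨a, 0, 0⟩ ⟨s, b, 0⟩ ⟨t, u, γ⟩ (by ext <;> simp; ring)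
    (by ext <;> simp [Int.negOnePow_odd _ hγ]) (by ext <;> simp [Int.negOnePow_odd _ hγ])

lemma embed_apply (g : G2Model) :
    embed a b s t u hγ g = ⟨a * g.a + s * g.b, b * g.b, 0⟩ * ⟨t, u, γ⟩ ^ g.c := by
  simp only [embed, lift, MonoidHom.coe_mk, OneHom.coe_mk, translation_zpow]
  congr 1; ext <;> simp <;> ring

lemma embed_eq_translation {g : G2Model} (hg : (embed a b s t u hγ g).c = 0) :
    embed a b s t u hγ g = ⟨a * g.a + s * g.b, b * g.b, 0⟩ := by
  rw [embed_apply] at hg ⊢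
  have hgc : g.c = 0 := by simpa [Int.ne_zero_of_odd hγ] using hg
  simp [hgc]

lemma embed_injective (ha : a ≠ 0) (hb : b ≠ 0) : Function.Injective (embed a b s t u hγ) := by
  refine (injective_iff_map_eq_one _).mpr fun g hg => ?_
  have hgc : g.c = 0 := by
    simpa [embed_apply, Int.ne_zero_of_odd hγ] using congrArg c hg
  rw [embed_eq_translation _ _ _ _ _ _ (congrArg c hg)] at hg
  have hgb : g.b = 0 := by simpa [hb] using congrArg G2Model.b hg
  have hga : g.a = 0 := by simpa [hgb, ha] using congrArg G2Model.a hg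
  ext <;> assumption

variable {a b s t u hγ} {g : G2Model}

lemma c_dvd_of_mem_range_embed (hg : g ∈ (embed a b s t u hγ).range) : γ ∣ g.c := by
  obtain ⟨g, rfl⟩ := hg
  simp [embed_apply]

lemma b_dvd_of_mem_range_embed (hg : g ∈ (embed a b s t u hγ).range) (hc : g.c = 0) :
    b ∣ g.b := by
  obtain ⟨g, rfl⟩ := hg
  rw [embed_eq_translation _ _ _ _ _ _ hc]
  exact dvd_mul_right _ _

lemma a_dvd_of_mem_range_embed (hb : b ≠ 0) (hg : g ∈ (embed a b s t u hγ).range)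
    (hc : g.c = 0) (hgb : g.b = 0) : a ∣ g.a := by
  obtain ⟨g, rfl⟩ := hg
  rw [embed_eq_translation _ _ _ _ _ _ hc] at hgb ⊢
  have : g.b = 0 := by simpa [hb] using hgb
  simp [this]

end Embed

section Index

variable (a b : ℕ) (s t u : ℤ) {γ : ℕ} (hγ : Odd (γ : ℤ))

def boxToQuotient (v : Fin a × Fin b × Fin γ) : G2Model ⧸ (embed a b s t u hγ).range :=
  QuotientGroup.mk ⟨v.1, v.2.1, v.2.2⟩

lemma boxToQuotient_injective (hb : 0 < b) :
    Function.Injective (boxToQuotient a b s t u hγ) := by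
  rintro ⟨i, j, l⟩ ⟨i', j', l'⟩ h
  rw [boxToQuotient, boxToQuotient, QuotientGroup.eq] at h
  have hq : (⟨i, j, l⟩ : G2Model)⁻¹ * ⟨i', j', l'⟩ =
      ⟨(l : ℤ).negOnePow * (i' - i), (l : ℤ).negOnePow * (j' - j), l' - l⟩ := by
    ext <;> simp <;> ring
  rw [hq] at h
  obtain rfl : l = l' := Fin.eq_of_dvd_sub (c_dvd_of_mem_range_embed h)
  obtain rfl : j = j' := Fin.eq_of_dvd_sub
    (Units.dvd_mul_left.mp (b_dvd_of_mem_range_embed h (sub_self _)))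
  obtain rfl : i = i' := Fin.eq_of_dvd_sub <| Units.dvd_mul_left.mp <|
    a_dvd_of_mem_range_embed (by exact_mod_cast hb.ne') h (sub_self _) (by simp)
  rfl

lemma exists_mul_mem_box (ha : 0 < a) (hb : 0 < b) (g : G2Model) :
    ∃ r ∈ (embed a b s t u hγ).range, 0 ≤ (g * r).a ∧ (g * r).a < a ∧
      0 ≤ (g * r).b ∧ (g * r).b < b ∧ 0 ≤ (g * r).c ∧ (g * r).c < γ := by
  have hγ₀ : (0 : ℤ) < γ := by have := Int.ne_zero_of_odd hγ; omega
  let e := embed a b s t u hγ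
  obtain ⟨k, hk⟩ := Int.exists_add_units_mul_mem_Ico g.c 1 hγ₀
  set g₁ := g * e ⟨0, 0, k⟩
  obtain ⟨m, hm⟩ := Int.exists_add_units_mul_mem_Ico g₁.b g₁.c.negOnePow (q := b) (by omega)
  set g₂ := g₁ * e ⟨0, m, 0⟩
  obtain ⟨m', hm'⟩ := Int.exists_add_units_mul_mem_Ico g₂.a g₂.c.negOnePow (q := a) (by omega)
  refine ⟨e ⟨0, 0, k⟩ * e ⟨0, m, 0⟩ * e ⟨m', 0, 0⟩,
    Subgroup.mul_mem _ (Subgroup.mul_mem _ ⟨_, rfl⟩ ⟨_, rfl⟩) ⟨_, rfl⟩, ?_⟩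
  have h₁ : g₁.c = g.c + (1 : ℤˣ) * (k * γ) := by simp [g₁, e, embed_apply]
  have h₂ : g₂.b = g₁.b + g₁.c.negOnePow * (m * b) ∧ g₂.c = g₁.c := by
    simp [g₂, e, embed_apply, mul_comm]
  have h₃ : g₂ * e ⟨m', 0, 0⟩ = ⟨g₂.a + g₂.c.negOnePow * (m' * a), g₂.b, g₂.c⟩ := by
    ext <;> simp [e, embed_apply, mul_comm]
  simp only [← mul_assoc]
  rw [h₃]
  simp only
  omega

lemma boxToQuotient_surjective (ha : 0 < a) (hb : 0 < b) :
    Function.Surjective (boxToQuotient a b s t u hγ) := by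
  intro q
  obtain ⟨g, rfl⟩ := QuotientGroup.mk_surjective q
  obtain ⟨r, hr, h⟩ := exists_mul_mem_box a b s t u hγ ha hb g
  refine ⟨(⟨(g * r).a.toNat, by omega⟩, ⟨(g * r).b.toNat, by omega⟩,
    ⟨(g * r).c.toNat, by omega⟩), ?_⟩
  rw [boxToQuotient, ← QuotientGroup.mk_mul_of_mem g hr]
  congr 1
  ext <;> exact Int.toNat_of_nonneg (by omega)

lemma index_range_embed (ha : 0 < a) (hb : 0 < b) :
    (embed a b s t u hγ).range.index = a * b * γ := by
  rw [Subgroup.index, ← Nat.card_congr (Equiv.ofBijective _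
    ⟨boxToQuotient_injective a b s t u hγ hb, boxToQuotient_surjective a b s t u hγ ha hb⟩)]
  simp [mul_assoc]

end Index

structure IsTriangularBasis (H : Subgroup G2Model) (a b s t u γ : ℤ) : Prop where
  a_pos : 0 < a
  b_pos : 0 < b
  γ_pos : 0 < γ
  x_mem : ⟨a, 0, 0⟩ ∈ H
  y_mem : ⟨s, b, 0⟩ ∈ H
  w_mem : ⟨t, u, γ⟩ ∈ H
  dvd_c : ∀ g ∈ H, γ ∣ g.c
  dvd_b : ∀ g ∈ H, g.c = 0 → b ∣ g.b
  dvd_a : ∀ g ∈ H, g.c = 0 → g.b = 0 → a ∣ g.a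

structure IsReducedBasis (H : Subgroup G2Model) (a b s t u γ : ℤ) : Prop
    extends IsTriangularBasis H a b s t u γ where
  s_mem : s ∈ Set.Ico 0 a
  t_mem : t ∈ Set.Ico 0 a
  u_mem : u ∈ Set.Ico 0 b

variable {H : Subgroup G2Model} {a b s t u γ : ℤ}

lemma sub_translation_mem {p q : ℤ} (hT : ⟨p, q, 0⟩ ∈ H) {g : G2Model} (hg : g ∈ H) (m : ℤ) :
    (⟨g.a - m * p, g.b - m * q, g.c⟩ : G2Model) ∈ H := by
  convert H.mul_mem (H.zpow_mem hT (-m)) hg using 1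
  rw [translation_zpow, translation_mul]
  ext <;> simp <;> ring

lemma exists_isTriangularBasis (hH : H.index ≠ 0) :
    ∃ a b s t u γ, IsTriangularBasis H a b s t u γ := by
  have hpow (g : G2Model) : ∃ n : ℕ, 0 < n ∧ g ^ (n : ℤ) ∈ H := by
    obtain ⟨n, hn, -, hmem⟩ := H.exists_pow_mem_of_index_ne_zero hH g
    exact ⟨n, hn, by rwa [zpow_natCast]⟩
  obtain ⟨nz, hnz, hz⟩ := hpow ⟨0, 0, 1⟩
  obtain ⟨ny, hny, hy⟩ := hpow ⟨0, 1, 0⟩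
  obtain ⟨nx, hnx, hx⟩ := hpow ⟨1, 0, 0⟩
  rw [vertical_zpow] at hz
  rw [translation_zpow] at hx hy
  obtain ⟨w, hw, hγ, hdvd_c⟩ := exists_pos_dvd_of_map_mul_inv (S := H)
    (fun g hg h hh => H.mul_mem hg (H.inv_mem hh)) c (by simp [sub_eq_add_neg]) hz
    (by simpa using hnz.ne')
  obtain ⟨y, ⟨hy, hyc⟩, hb, hdvd_b⟩ := exists_pos_dvd_of_map_mul_inv
    (S := {g | g ∈ H ∧ g.c = 0})
    (fun g hg h hh => ⟨H.mul_mem hg.1 (H.inv_mem hh.1), by simp [hg.2, hh.2]⟩) b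
    (fun g hg h hh => by simp [hg.2, hh.2, sub_eq_add_neg]) ⟨hy, rfl⟩ (by simpa using hny.ne')
  obtain ⟨x, ⟨hx, hxc, hxb⟩, ha, hdvd_a⟩ := exists_pos_dvd_of_map_mul_inv
    (S := {g | g ∈ H ∧ g.c = 0 ∧ g.b = 0})
    (fun g hg h hh => ⟨H.mul_mem hg.1 (H.inv_mem hh.1), by simp [hg.2, hh.2]⟩) a
    (fun g hg h hh => by simp [hg.2, hh.2, sub_eq_add_neg]) ⟨hx, rfl, by simp⟩
    (by simpa using hnx.ne')
  refine ⟨x.a, y.b, y.a, w.a, w.b, w.c, ha, hb, hγ, ?_, ?_, ?_, hdvd_c,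
    fun g hg hgc => hdvd_b g ⟨hg, hgc⟩, fun g hg hgc hgb => hdvd_a g ⟨hg, hgc, hgb⟩⟩
  · convert hx using 1; ext <;> simp [hxc, hxb]
  · convert hy using 1; ext <;> simp [hyc]
  · exact hw

lemma IsTriangularBasis.exists_isReducedBasis (h : IsTriangularBasis H a b s t u γ) :
    ∃ s t u, IsReducedBasis H a b s t u γ := by
  have hY : (⟨s % a, b, 0⟩ : G2Model) ∈ H := by
    simpa [Int.emod_def, mul_comm] using sub_translation_mem h.x_mem h.y_mem (s / a)
  have hW₁ : (⟨t - u / b * (s % a), u % b, γ⟩ : G2Model) ∈ H := by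
    simpa [Int.emod_def, mul_comm] using sub_translation_mem hY h.w_mem (u / b)
  have hW : (⟨(t - u / b * (s % a)) % a, u % b, γ⟩ : G2Model) ∈ H := by
    simpa [Int.emod_def, mul_comm] using
      sub_translation_mem h.x_mem hW₁ ((t - u / b * (s % a)) / a)
  have ha := h.a_pos
  have hb := h.b_pos
  exact ⟨_, _, _,
    { h with
      y_mem := hY
      w_mem := hW
      s_mem := ⟨Int.emod_nonneg _ ha.ne', Int.emod_lt_of_pos _ ha⟩
      t_mem := ⟨Int.emod_nonneg _ ha.ne', Int.emod_lt_of_pos _ ha⟩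
      u_mem := ⟨Int.emod_nonneg _ hb.ne', Int.emod_lt_of_pos _ hb⟩ }⟩

lemma IsTriangularBasis.range_embed_eq (h : IsTriangularBasis H a b s t u γ) (hγ : Odd γ) :
    (embed a b s t u hγ).range = H := by
  refine le_antisymm ?_ fun g hg => ?_
  · rintro _ ⟨g, rfl⟩
    exact H.mul_mem (H.mul_mem (H.zpow_mem h.x_mem _) (H.zpow_mem h.y_mem _))
      (H.zpow_mem h.w_mem _)
  obtain ⟨k, hk⟩ := h.dvd_c g hg
  set g₁ := g * (⟨t, u, γ⟩ : G2Model) ^ (-k)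
  have hg₁ : g₁ ∈ H := H.mul_mem hg (H.zpow_mem h.w_mem _)
  have hc₁ : g₁.c = 0 := by simp [g₁, hk]; ring
  obtain ⟨y, hy⟩ := h.dvd_b g₁ hg₁ hc₁
  have hg₂ : (⟨s, b, 0⟩ : G2Model) ^ (-y) * g₁ = ⟨-y * s + g₁.a, 0, 0⟩ := by
    rw [translation_zpow, translation_mul, hy, hc₁]; congr 1; ring
  obtain ⟨x, hx⟩ := h.dvd_a _ (H.mul_mem (H.zpow_mem h.y_mem _) hg₁) (by rw [hg₂]) (by rw [hg₂])
  refine ⟨⟨x, y, k⟩, ?_⟩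
  have : g₁ = ⟨a * x + s * y, b * y, 0⟩ := by
    rw [hg₂] at hx
    ext <;> simp only at hx ⊢ <;> linarith
  rw [embed_apply, ← this]
  simp [g₁]

lemma IsReducedBasis.unique {a' b' s' t' u' γ' : ℤ} (h : IsReducedBasis H a b s t u γ)
    (h' : IsReducedBasis H a' b' s' t' u' γ') (hγ : Odd γ) :
    a = a' ∧ b = b' ∧ s = s' ∧ t = t' ∧ u = u' ∧ γ = γ' := by
  obtain rfl : γ = γ' := Int.dvd_antisymm h.γ_pos.le h'.γ_pos.le
    (h.dvd_c _ h'.w_mem) (h'.dvd_c _ h.w_mem)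
  obtain rfl : b = b' := Int.dvd_antisymm h.b_pos.le h'.b_pos.le
    (h.dvd_b _ h'.y_mem rfl) (h'.dvd_b _ h.y_mem rfl)
  obtain rfl : a = a' := Int.dvd_antisymm h.a_pos.le h'.a_pos.le
    (h.dvd_a _ h'.x_mem rfl rfl) (h'.dvd_a _ h.x_mem rfl rfl)
  have hy : (⟨s', b, 0⟩ : G2Model) * (⟨s, b, 0⟩)⁻¹ = ⟨s' - s, 0, 0⟩ := by
    ext <;> simp; ring
  have hw : (⟨t', u', γ⟩ : G2Model) * (⟨t, u, γ⟩)⁻¹ = ⟨t' - t, u' - u, 0⟩ := by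
    ext <;> simp [Int.negOnePow_odd _ hγ] <;> ring
  have hys := H.mul_mem h'.y_mem (H.inv_mem h.y_mem)
  have hwt := H.mul_mem h'.w_mem (H.inv_mem h.w_mem)
  rw [hy] at hys
  rw [hw] at hwt
  obtain rfl : u = u' := Int.eq_of_dvd_sub h.u_mem h'.u_mem (h.dvd_b _ hwt rfl)
  exact ⟨rfl, rfl, Int.eq_of_dvd_sub h.s_mem h'.s_mem (h.dvd_a _ hys rfl rfl),
    Int.eq_of_dvd_sub h.t_mem h'.t_mem (h.dvd_a _ hwt rfl (sub_self u)), rfl, rfl⟩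

lemma isReducedBasis_range_embed (hγ : Odd γ) (ha : 0 < a) (hb : 0 < b) (hγ' : 0 < γ)
    (hs : s ∈ Set.Ico 0 a) (ht : t ∈ Set.Ico 0 a) (hu : u ∈ Set.Ico 0 b) :
    IsReducedBasis (embed a b s t u hγ).range a b s t u γ where
  a_pos := ha
  b_pos := hb
  γ_pos := hγ'
  x_mem := ⟨⟨1, 0, 0⟩, by simp [embed_apply]⟩
  y_mem := ⟨⟨0, 1, 0⟩, by simp [embed_apply]⟩
  w_mem := ⟨⟨0, 0, 1⟩, by simp [embed_apply]⟩
  dvd_c _ := c_dvd_of_mem_range_embed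
  dvd_b _ := b_dvd_of_mem_range_embed
  dvd_a _ := a_dvd_of_mem_range_embed hb.ne'
  s_mem := hs
  t_mem := ht
  u_mem := hu

lemma isEmpty_mulEquiv_of_forall_even (hH : ∀ g ∈ H, Even g.c) : IsEmpty (H ≃* G2Model) := by
  refine ⟨fun e => ?_⟩
  have hcomm (g h : H) : g * h = h * g := Subtype.ext <| by
    ext <;> simp [Int.negOnePow_even _ (hH _ g.2), Int.negOnePow_even _ (hH _ h.2)] <;> ring
  have := congrArg G2Model.a (congrArg e (hcomm (e.symm ⟨1, 0, 0⟩) (e.symm ⟨0, 0, 1⟩)))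
  simp at this

end G2Model

def divisorTriples (n : ℕ) : Finset (ℕ × ℕ × ℕ) :=
  (Finset.range (n+1) ×ˢ Finset.range (n+1) ×ˢ Finset.range (n+1)).filter
      (fun t => 0 < t.1 ∧ 0 < t.2.1 ∧ 0 < t.2.2 ∧ t.1 * t.2.1 * t.2.2 = n)

def oddDivisorTriples (n : ℕ) : Finset (ℕ × ℕ × ℕ) :=
  (divisorTriples n).filter fun t => Odd t.2.2

lemma mem_divisorTriples {n : ℕ} {t : ℕ × ℕ × ℕ} :
    t ∈ divisorTriples n ↔ 0 < t.1 ∧ 0 < t.2.1 ∧ 0 < t.2.2 ∧ t.1 * t.2.1 * t.2.2 = n := by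
  obtain ⟨a, b, c⟩ := t
  simp only [divisorTriples, Finset.mem_filter, Finset.mem_product, Finset.mem_range,
    and_iff_right_iff_imp]
  rintro ⟨ha, hb, hc, rfl⟩
  refine ⟨?_, ?_, ?_⟩ <;> apply Nat.lt_succ_of_le <;> apply Nat.le_of_dvd (by positivity)
  · exact ⟨b * c, by ring⟩
  · exact ⟨a * c, by ring⟩
  · exact ⟨a * b, by ring⟩

lemma mem_oddDivisorTriples {n : ℕ} {t : ℕ × ℕ × ℕ} :
    t ∈ oddDivisorTriples n ↔
      (0 < t.1 ∧ 0 < t.2.1 ∧ 0 < t.2.2 ∧ t.1 * t.2.1 * t.2.2 = n) ∧ Odd t.2.2 := by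
  rw [oddDivisorTriples, Finset.mem_filter, mem_divisorTriples]

lemma sum_filter_even_divisorTriples (n : ℕ) :
    ∑ t ∈ (divisorTriples n).filter (fun t => Even t.2.2), t.1 ^ 2 * t.2.1 =
      if 2 ∣ n then omegaFn (n / 2) else 0 := by
  split_ifs with hn
  · obtain ⟨m, rfl⟩ := hn
    have : (divisorTriples (2 * m)).filter (fun t => Even t.2.2) =
        (divisorTriples m).image fun t => (t.1, t.2.1, 2 * t.2.2) := by
      ext ⟨a, b, c⟩
      simp only [Finset.mem_filter, Finset.mem_image, mem_divisorTriples, Prod.mk.injEq,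
        Prod.exists]
      constructor
      · rintro ⟨⟨ha, hb, hc, habc⟩, k, rfl⟩
        exact ⟨a, b, k, ⟨ha, hb, by omega, by linarith⟩, rfl, rfl, by ring⟩
      · rintro ⟨a, b, k, ⟨ha, hb, hk, rfl⟩, rfl, rfl, rfl⟩
        exact ⟨⟨ha, hb, by omega, by ring⟩, k, by ring⟩
    rw [this, Finset.sum_image fun t _ t' _ h => by
      simp only [Prod.mk.injEq, mul_right_inj' two_ne_zero] at h; ext <;> simp [h]]
    rw [Nat.mul_div_cancel_left _ two_pos]
    rfl
  · refine Finset.sum_eq_zero fun t ht => absurd ?_ hn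
    rw [Finset.mem_filter, mem_divisorTriples] at ht
    obtain ⟨⟨-, -, -, rfl⟩, c, hc⟩ := ht
    exact ⟨t.1 * t.2.1 * c, by rw [hc]; ring⟩

lemma omegaFn_eq_sum_oddDivisorTriples_add (n : ℕ) :
    omegaFn n = ∑ t ∈ oddDivisorTriples n, t.1 ^ 2 * t.2.1 +
      if 2 ∣ n then omegaFn (n / 2) else 0 := by
  rw [← sum_filter_even_divisorTriples, add_comm, oddDivisorTriples]
  simp_rw [← Nat.not_even_iff_odd]
  exact (Finset.sum_filter_add_sum_filter_not _ _ _).symm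

namespace G2Model

/-- The parameters `⟨(a, b, γ), s, t, u⟩` of a reduced basis with `abγ = n` and `γ` odd. -/
abbrev Params (n : ℕ) : Type := Σ t : oddDivisorTriples n, Fin t.1.1 × Fin t.1.1 × Fin t.1.2.1

variable {n : ℕ}

lemma odd_of_mem_oddDivisorTriples (t : oddDivisorTriples n) : Odd (t.1.2.2 : ℤ) :=
  (Int.odd_coe_nat _).mpr (mem_oddDivisorTriples.mp t.2).2

def Params.subgroup (x : Params n) : Subgroup G2Model :=
  (embed x.1.1.1 x.1.1.2.1 x.2.1 x.2.2.1 x.2.2.2 (odd_of_mem_oddDivisorTriples x.1)).range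

lemma Params.isReducedBasis (x : Params n) :
    IsReducedBasis x.subgroup x.1.1.1 x.1.1.2.1 x.2.1 x.2.2.1 x.2.2.2 x.1.1.2.2 := by
  obtain ⟨⟨⟨a, b, γ⟩, ht⟩, s, t, u⟩ := x
  obtain ⟨⟨ha, hb, hγ, -⟩, -⟩ := mem_oddDivisorTriples.mp ht
  exact isReducedBasis_range_embed _ (by exact_mod_cast ha) (by exact_mod_cast hb)
    (by exact_mod_cast hγ) ⟨by positivity, by exact_mod_cast s.2⟩
    ⟨by positivity, by exact_mod_cast t.2⟩ ⟨by positivity, by exact_mod_cast u.2⟩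

lemma Params.index_subgroup (x : Params n) : x.subgroup.index = n := by
  obtain ⟨⟨⟨a, b, γ⟩, ht⟩, s, t, u⟩ := x
  obtain ⟨⟨ha, hb, -, habc⟩, -⟩ := mem_oddDivisorTriples.mp ht
  exact (index_range_embed a b s t u _ ha hb).trans habc

lemma Params.nonempty_mulEquiv (x : Params n) : Nonempty (x.subgroup ≃* G2Model) :=
  ⟨(MonoidHom.ofInjective (embed_injective _ _ _ _ _ _ x.isReducedBasis.a_pos.ne'
    x.isReducedBasis.b_pos.ne')).symm⟩

lemma Params.subgroup_injective : Function.Injective (Params.subgroup (n := n)) := by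
  rintro ⟨⟨⟨a, b, γ⟩, hm⟩, s, t, u⟩ x' h
  have h' := x'.isReducedBasis
  rw [← h] at h'
  obtain ⟨ha, hb, hs, ht, hu, hγ⟩ :=
    (Params.isReducedBasis _).unique h' (odd_of_mem_oddDivisorTriples ⟨_, hm⟩)
  obtain ⟨⟨⟨a', b', γ'⟩, hm'⟩, s', t', u'⟩ := x'
  obtain ⟨rfl, rfl, rfl⟩ : a = a' ∧ b = b' ∧ γ = γ' := by simp_all
  obtain ⟨rfl, rfl, rfl⟩ : s = s' ∧ t = t' ∧ u = u' := by simp_all [Fin.ext_iff]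
  rfl

lemma Params.exists_subgroup_eq {H : Subgroup G2Model} (hn : n ≠ 0) (hH : H.index = n)
    (he : Nonempty (H ≃* G2Model)) : ∃ x : Params n, x.subgroup = H := by
  obtain ⟨a, b, s₀, t₀, u₀, γ, h₀⟩ := exists_isTriangularBasis (hH ▸ hn)
  obtain ⟨s, t, u, h⟩ := h₀.exists_isReducedBasis
  have hγ : Odd γ := by
    by_contra hodd
    exact (isEmpty_mulEquiv_of_forall_even fun g hg =>
      (Int.not_odd_iff_even.mp hodd).trans_dvd (h.dvd_c g hg)).false he.some
  rw [← h.range_embed_eq hγ] at hH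
  lift a to ℕ using h.a_pos.le
  lift b to ℕ using h.b_pos.le
  lift γ to ℕ using h.γ_pos.le
  lift s to ℕ using h.s_mem.1
  lift t to ℕ using h.t_mem.1
  lift u to ℕ using h.u_mem.1
  have ha : 0 < a := by exact_mod_cast h.a_pos
  have hb : 0 < b := by exact_mod_cast h.b_pos
  rw [index_range_embed a b s t u hγ ha hb] at hH
  have hmem : (a, b, γ) ∈ oddDivisorTriples n := mem_oddDivisorTriples.mpr
    ⟨⟨ha, hb, by exact_mod_cast h.γ_pos, hH⟩, (Int.odd_coe_nat _).mp hγ⟩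
  exact ⟨⟨⟨_, hmem⟩, ⟨s, by exact_mod_cast h.s_mem.2⟩, ⟨t, by exact_mod_cast h.t_mem.2⟩,
    ⟨u, by exact_mod_cast h.u_mem.2⟩⟩, h.range_embed_eq hγ⟩

lemma card_subgroups_mulEquiv (hn : n ≠ 0) :
    Nat.card {H : Subgroup G2Model // H.index = n ∧ Nonempty (H ≃* G2Model)} =
      ∑ t ∈ oddDivisorTriples n, t.1 ^ 2 * t.2.1 := by
  let f (x : Params n) : {H : Subgroup G2Model // H.index = n ∧ Nonempty (H ≃* G2Model)} :=
    ⟨x.subgroup, x.index_subgroup, x.nonempty_mulEquiv⟩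
  have hf : Function.Bijective f :=
    ⟨fun x y h => Params.subgroup_injective (congrArg Subtype.val h),
      fun H => (Params.exists_subgroup_eq hn H.2.1 H.2.2).imp fun x hx => Subtype.ext hx⟩
  rw [← Nat.card_congr (Equiv.ofBijective f hf), Nat.card_eq_fintype_card, Fintype.card_sigma]
  simpa [sq, mul_assoc] using Finset.sum_attach _ fun t : ℕ × ℕ × ℕ => t.1 * (t.1 * t.2.1)

end G2Model

namespace G2

def x : G2 := PresentedGroup.of 0
def y : G2 := PresentedGroup.of 1
def z : G2 := PresentedGroup.of 2

lemma commute_x_y : Commute x y :=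
  commutatorElement_eq_one_iff_commute.mp (PresentedGroup.one_of_mem (by simp [g2Rels]))

lemma z_mul_x_mul_z_inv : z * x * z⁻¹ = x⁻¹ :=
  mul_eq_one_iff_eq_inv.mp (PresentedGroup.one_of_mem (by simp [g2Rels]))

lemma z_mul_y_mul_z_inv : z * y * z⁻¹ = y⁻¹ :=
  mul_eq_one_iff_eq_inv.mp (PresentedGroup.one_of_mem (by simp [g2Rels]))

def toModel : G2 →* G2Model :=
  PresentedGroup.toGroup (f := ![⟨1, 0, 0⟩, ⟨0, 1, 0⟩, ⟨0, 0, 1⟩]) <| by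
    rintro r (rfl | rfl | rfl) <;> ext <;> simp

def ofModel : G2Model →* G2 :=
  G2Model.lift x y z commute_x_y z_mul_x_mul_z_inv z_mul_y_mul_z_inv

def equivModel : G2 ≃* G2Model :=
  toModel.toMulEquiv ofModel
    (PresentedGroup.ext fun i => by fin_cases i <;> simp [toModel, ofModel, G2Model.lift, x, y, z])
    (MonoidHom.ext fun g => by
      simp only [toModel, ofModel, G2Model.lift, x, y, z]
      ext <;> simp [G2Model.translation_zpow, G2Model.vertical_zpow])

end G2

lemma card_subgroup_index_mulEquiv_congr {G G' : Type*} [Group G] [Group G'] (e : G ≃* G')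
    (n : ℕ) :
    Nat.card {H : Subgroup G // H.index = n ∧ Nonempty (H ≃* G)} =
      Nat.card {H : Subgroup G' // H.index = n ∧ Nonempty (H ≃* G')} :=
  Nat.card_congr <| e.mapSubgroup.toEquiv.subtypeEquiv fun H => by
    refine and_congr (by simp [Subgroup.index_map_equiv]) ⟨fun ⟨f⟩ => ?_, fun ⟨f⟩ => ?_⟩
    · exact ⟨((e.subgroupMap H).symm.trans f).trans e⟩
    · exact ⟨((e.subgroupMap H).trans f).trans e.symm⟩

theorem stmt19 (n : ℕ) (hn : 0 < n) :
    (Nat.card {H : Subgroup G2 // H.index = n ∧ Nonempty (H ≃* G2)} : ℤ) =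
      (omegaFn n : ℤ) - (if 2 ∣ n then (omegaFn (n / 2) : ℤ) else 0) := by
  rw [card_subgroup_index_mulEquiv_congr G2.equivModel, G2Model.card_subgroups_mulEquiv hn.ne',
    omegaFn_eq_sum_oddDivisorTriples_add]
  split_ifs <;> push_cast <;> ring
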